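/- Let n = 2s+1 ≥ 3 and A = k⟨x₁,…,x_s,y₀,…,y_s⟩. The set of 2s² + 2s + 1 quadratic forms F = {h₁(i,j), h₂(i,j) : 1 ≤ i,j ≤ s} ∪ {q₁(i), q₂(i) : 1 ≤ i ≤ s} ∪ {y₀²} generates A₃, i.e., the k-span of {v·f, f·v : f ∈ F, v a generator} equals A₃. -/
import Mathlib

noncomputable section

open FreeAlgebra

def xg (k : Type*) [Field k] (s : ℕ) (i : Fin s) : FreeAlgebra k (Fin s ⊕ Fin (s + 1)) :=
  ι k (Sum.inl i)

def yg (k : Type*) [Field k] (s : ℕ) (i : Fin (s + 1)) : FreeAlgebra k (Fin s ⊕ Fin (s + 1)) :=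
  ι k (Sum.inr i)

def h1 (k : Type*) [Field k] (s : ℕ) (i j : Fin s) : FreeAlgebra k (Fin s ⊕ Fin (s + 1)) :=
  xg k s i * yg k s j.succ

def h2 (k : Type*) [Field k] (s : ℕ) (i j : Fin s) : FreeAlgebra k (Fin s ⊕ Fin (s + 1)) :=
  xg k s i * xg k s j - yg k s i.succ * yg k s j.succ

def q1 (k : Type*) [Field k] (s : ℕ) (i : Fin s) : FreeAlgebra k (Fin s ⊕ Fin (s + 1)) :=
  yg k s 0 * xg k s i + xg k s i * yg k s 0 + yg k s i.succ * yg k s 0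

def q2 (k : Type*) [Field k] (s : ℕ) (i : Fin s) : FreeAlgebra k (Fin s ⊕ Fin (s + 1)) :=
  yg k s 0 * yg k s i.succ + yg k s i.succ * yg k s 0

/-- The set `F` of `2s² + 2s + 1` quadratic forms
`{h₁(i,j), h₂(i,j)} ∪ {q₁(i), q₂(i)} ∪ {y₀²}`. -/
def F13 (k : Type*) [Field k] (s : ℕ) : Set (FreeAlgebra k (Fin s ⊕ Fin (s + 1))) :=
  {f | (∃ i j, f = h1 k s i j) ∨ (∃ i j, f = h2 k s i j) ∨
    (∃ i, f = q1 k s i) ∨ (∃ i, f = q2 k s i) ∨ f = yg k s 0 * yg k s 0}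

/-- The span of `{v·f, f·v : f ∈ F13}`. -/
def S13 (k : Type*) [Field k] (s : ℕ) : Submodule k (FreeAlgebra k (Fin s ⊕ Fin (s + 1))) :=
  Submodule.span k {g | ∃ f ∈ F13 k s, ∃ v : Fin s ⊕ Fin (s + 1),
    g = ι k v * f ∨ g = f * ι k v}

section Aux

variable {k : Type*} [Field k] {s : ℕ}

lemma mem_h1 (i j : Fin s) : h1 k s i j ∈ F13 k s := Or.inl ⟨i, j, rfl⟩
lemma mem_h2 (i j : Fin s) : h2 k s i j ∈ F13 k s := Or.inr (Or.inl ⟨i, j, rfl⟩)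
lemma mem_q1 (i : Fin s) : q1 k s i ∈ F13 k s := Or.inr (Or.inr (Or.inl ⟨i, rfl⟩))
lemma mem_q2 (i : Fin s) : q2 k s i ∈ F13 k s := Or.inr (Or.inr (Or.inr (Or.inl ⟨i, rfl⟩)))
lemma mem_z2 : yg k s 0 * yg k s 0 ∈ F13 k s := Or.inr (Or.inr (Or.inr (Or.inr rfl)))

lemma memL {f : FreeAlgebra k (Fin s ⊕ Fin (s + 1))} (hf : f ∈ F13 k s)
    (v : Fin s ⊕ Fin (s + 1)) : ι k v * f ∈ S13 k s :=
  Submodule.subset_span ⟨f, hf, v, Or.inl rfl⟩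

lemma memR {f : FreeAlgebra k (Fin s ⊕ Fin (s + 1))} (hf : f ∈ F13 k s)
    (v : Fin s ⊕ Fin (s + 1)) : f * ι k v ∈ S13 k s :=
  Submodule.subset_span ⟨f, hf, v, Or.inr rfl⟩

-- words with an adjacent pair x_i y_{j+1}

lemma wXYr (i j : Fin s) (v : Fin s ⊕ Fin (s + 1)) :
    xg k s i * yg k s j.succ * ι k v ∈ S13 k s := by
  have h := memR (mem_h1 (k := k) (s := s) i j) v
  simpa only [h1] using h

lemma wXYl (v : Fin s ⊕ Fin (s + 1)) (i j : Fin s) :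
    ι k v * (xg k s i * yg k s j.succ) ∈ S13 k s := by
  have h := memL (mem_h1 (k := k) (s := s) i j) v
  simpa only [h1] using h

-- words with an adjacent pair y₀ y₀

lemma wZZr (v : Fin s ⊕ Fin (s + 1)) : yg k s 0 * yg k s 0 * ι k v ∈ S13 k s :=
  memR mem_z2 v

lemma wZZl (v : Fin s ⊕ Fin (s + 1)) : ι k v * (yg k s 0 * yg k s 0) ∈ S13 k s :=
  memL mem_z2 v

-- XZY
lemma wXZY (i j : Fin s) : xg k s i * yg k s 0 * yg k s j.succ ∈ S13 k s := by
  have e : xg k s i * yg k s 0 * yg k s j.succ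
      = ι k (Sum.inl i) * q2 k s j - h1 k s i j * ι k (Sum.inr 0) := by
    simp only [q2, h1, xg, yg]; noncomm_ring
  rw [e]
  exact sub_mem (memL (mem_q2 j) _) (memR (mem_h1 i j) _)

-- YZY
lemma wYZY (i j : Fin s) : yg k s i.succ * yg k s 0 * yg k s j.succ ∈ S13 k s := by
  have e : yg k s i.succ * yg k s 0 * yg k s j.succ
      = q1 k s i * ι k (Sum.inr j.succ) - ι k (Sum.inr 0) * h1 k s i j
        - xg k s i * yg k s 0 * yg k s j.succ := by
    simp only [q1, h1, xg, yg]; noncomm_ring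
  rw [e]
  exact sub_mem (sub_mem (memR (mem_q1 i) _) (memL (mem_h1 i j) _)) (wXZY i j)

-- YYZ
lemma wYYZ (i j : Fin s) : yg k s i.succ * yg k s j.succ * yg k s 0 ∈ S13 k s := by
  have e : yg k s i.succ * yg k s j.succ * yg k s 0
      = ι k (Sum.inr i.succ) * q2 k s j - yg k s i.succ * yg k s 0 * yg k s j.succ := by
    simp only [q2, xg, yg]; noncomm_ring
  rw [e]
  exact sub_mem (memL (mem_q2 j) _) (wYZY i j)

-- ZYZ
lemma wZYZ (j : Fin s) : yg k s 0 * yg k s j.succ * yg k s 0 ∈ S13 k s := by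
  have e : yg k s 0 * yg k s j.succ * yg k s 0
      = ι k (Sum.inr 0) * q2 k s j - yg k s 0 * yg k s 0 * ι k (Sum.inr j.succ) := by
    simp only [q2, xg, yg]; noncomm_ring
  rw [e]
  exact sub_mem (memL (mem_q2 j) _) (wZZr _)

-- ZYY
lemma wZYY (i j : Fin s) : yg k s 0 * yg k s i.succ * yg k s j.succ ∈ S13 k s := by
  have e : yg k s 0 * yg k s i.succ * yg k s j.succ
      = q2 k s i * ι k (Sum.inr j.succ) - yg k s i.succ * yg k s 0 * yg k s j.succ := by
    simp only [q2, xg, yg]; noncomm_ring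
  rw [e]
  exact sub_mem (memR (mem_q2 i) _) (wYZY i j)

-- XXZ
lemma wXXZ (i j : Fin s) : xg k s i * xg k s j * yg k s 0 ∈ S13 k s := by
  have e : xg k s i * xg k s j * yg k s 0
      = h2 k s i j * ι k (Sum.inr 0) + yg k s i.succ * yg k s j.succ * yg k s 0 := by
    simp only [h2, xg, yg]; noncomm_ring
  rw [e]
  exact add_mem (memR (mem_h2 i j) _) (wYYZ i j)

-- ZXX
lemma wZXX (i j : Fin s) : yg k s 0 * xg k s i * xg k s j ∈ S13 k s := by
  have e : yg k s 0 * xg k s i * xg k s j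
      = ι k (Sum.inr 0) * h2 k s i j + yg k s 0 * yg k s i.succ * yg k s j.succ := by
    simp only [h2, xg, yg]; noncomm_ring
  rw [e]
  exact add_mem (memL (mem_h2 i j) _) (wZYY i j)

-- XZX
lemma wXZX (i j : Fin s) : xg k s i * yg k s 0 * xg k s j ∈ S13 k s := by
  have e : xg k s i * yg k s 0 * xg k s j
      = ι k (Sum.inl i) * q1 k s j - xg k s i * xg k s j * yg k s 0
        - xg k s i * yg k s j.succ * ι k (Sum.inr 0) := by
    simp only [q1, xg, yg]; noncomm_ring
  rw [e]
  exact sub_mem (sub_mem (memL (mem_q1 j) _) (wXXZ i j)) (wXYr i j _)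

-- YZX
lemma wYZX (i j : Fin s) : yg k s i.succ * yg k s 0 * xg k s j ∈ S13 k s := by
  have e : yg k s i.succ * yg k s 0 * xg k s j
      = q1 k s i * ι k (Sum.inl j) - yg k s 0 * xg k s i * xg k s j
        - xg k s i * yg k s 0 * xg k s j := by
    simp only [q1, xg, yg]; noncomm_ring
  rw [e]
  exact sub_mem (sub_mem (memR (mem_q1 i) _) (wZXX i j)) (wXZX i j)

-- YXZ
lemma wYXZ (b i : Fin s) : yg k s b.succ * xg k s i * yg k s 0 ∈ S13 k s := by
  have e : yg k s b.succ * xg k s i * yg k s 0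
      = ι k (Sum.inr b.succ) * q1 k s i - yg k s b.succ * yg k s 0 * xg k s i
        - yg k s b.succ * yg k s i.succ * yg k s 0 := by
    simp only [q1, xg, yg]; noncomm_ring
  rw [e]
  exact sub_mem (sub_mem (memL (mem_q1 i) _) (wYZX b i)) (wYYZ b i)

-- ZXZ
lemma wZXZ (i : Fin s) : yg k s 0 * xg k s i * yg k s 0 ∈ S13 k s := by
  have e : yg k s 0 * xg k s i * yg k s 0
      = ι k (Sum.inr 0) * q1 k s i - yg k s 0 * yg k s 0 * ι k (Sum.inl i)
        - yg k s 0 * yg k s i.succ * yg k s 0 := by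
    simp only [q1, xg, yg]; noncomm_ring
  rw [e]
  exact sub_mem (sub_mem (memL (mem_q1 i) _) (wZZr _)) (wZYZ i)

-- ZYX
lemma wZYX (i j : Fin s) : yg k s 0 * yg k s i.succ * xg k s j ∈ S13 k s := by
  have e : yg k s 0 * yg k s i.succ * xg k s j
      = q2 k s i * ι k (Sum.inl j) - yg k s i.succ * yg k s 0 * xg k s j := by
    simp only [q2, xg, yg]; noncomm_ring
  rw [e]
  exact sub_mem (memR (mem_q2 i) _) (wYZX i j)

-- XXX
lemma wXXX (a i j : Fin s) : xg k s a * xg k s i * xg k s j ∈ S13 k s := by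
  have e : xg k s a * xg k s i * xg k s j
      = ι k (Sum.inl a) * h2 k s i j + xg k s a * yg k s i.succ * ι k (Sum.inr j.succ) := by
    simp only [h2, xg, yg]; noncomm_ring
  rw [e]
  exact add_mem (memL (mem_h2 i j) _) (wXYr a i _)

-- YYY
lemma wYYY (i j l : Fin s) : yg k s i.succ * yg k s j.succ * yg k s l.succ ∈ S13 k s := by
  have e : yg k s i.succ * yg k s j.succ * yg k s l.succ
      = ι k (Sum.inl i) * (xg k s j * yg k s l.succ) - h2 k s i j * ι k (Sum.inr l.succ) := by
    simp only [h2, xg, yg]; noncomm_ring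
  rw [e]
  exact sub_mem (wXYl _ j l) (memR (mem_h2 i j) _)

-- YXX
lemma wYXX (a i j : Fin s) : yg k s a.succ * xg k s i * xg k s j ∈ S13 k s := by
  have e : yg k s a.succ * xg k s i * xg k s j
      = ι k (Sum.inr a.succ) * h2 k s i j + yg k s a.succ * yg k s i.succ * yg k s j.succ := by
    simp only [h2, xg, yg]; noncomm_ring
  rw [e]
  exact add_mem (memL (mem_h2 i j) _) (wYYY a i j)

-- YYX
lemma wYYX (i j l : Fin s) : yg k s i.succ * yg k s j.succ * xg k s l ∈ S13 k s := by
  have e : yg k s i.succ * yg k s j.succ * xg k s l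
      = xg k s i * xg k s j * xg k s l - h2 k s i j * ι k (Sum.inl l) := by
    simp only [h2, xg, yg]; noncomm_ring
  rw [e]
  exact sub_mem (wXXX i j l) (memR (mem_h2 i j) _)


lemma key (a b c : Fin s ⊕ Fin (s + 1)) : ι k a * (ι k b * ι k c) ∈ S13 k s := by
  rw [← mul_assoc]
  rcases a with a | a
  · rcases b with b | b
    · rcases c with c | c
      · exact wXXX a b c
      · induction c using Fin.cases with
        | zero => exact wXXZ a b
        | succ c => { have h := wXYl (k := k) (s := s) (Sum.inl a) b c; rwa [← mul_assoc] at h }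
    · induction b using Fin.cases with
      | zero =>
        rcases c with c | c
        · exact wXZX a c
        · induction c using Fin.cases with
          | zero => { have h := wZZl (k := k) (s := s) (Sum.inl a); rwa [← mul_assoc] at h }
          | succ c => exact wXZY a c
      | succ b => exact wXYr a b c
  · induction a using Fin.cases with
    | zero =>
      rcases b with b | b
      · rcases c with c | c
        · exact wZXX b c
        · induction c using Fin.cases with
          | zero => exact wZXZ b
          | succ c => { have h := wXYl (k := k) (s := s) (Sum.inr 0) b c; rwa [← mul_assoc] at h }
      · induction b using Fin.cases with
        | zero => exact wZZr c
        | succ b =>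
          rcases c with c | c
          · exact wZYX b c
          · induction c using Fin.cases with
            | zero => exact wZYZ b
            | succ c => exact wZYY b c
    | succ a =>
      rcases b with b | b
      · rcases c with c | c
        · exact wYXX a b c
        · induction c using Fin.cases with
          | zero => exact wYXZ a b
          | succ c => { have h := wXYl (k := k) (s := s) (Sum.inr a.succ) b c; rwa [← mul_assoc] at h }
      · induction b using Fin.cases with
        | zero =>
          rcases c with c | c
          · exact wYZX a c
          · induction c using Fin.cases with
            | zero => { have h := wZZl (k := k) (s := s) (Sum.inr a.succ); rwa [← mul_assoc] at h }
            | succ c => exact wYZY a c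
        | succ b =>
          rcases c with c | c
          · exact wYYX a b c
          · induction c using Fin.cases with
            | zero => exact wYYZ a b
            | succ c => exact wYYY a b c

/-- Every triple product of generators lies in the span of degree-3 monomials. -/
lemma mono3 (a b c : Fin s ⊕ Fin (s + 1)) :
    ι k a * ι k b * ι k c ∈ Submodule.span k {m : FreeAlgebra k (Fin s ⊕ Fin (s + 1)) |
      ∃ w : List (Fin s ⊕ Fin (s + 1)), w.length = 3 ∧ m = (w.map (ι k)).prod} :=
  Submodule.subset_span ⟨[a, b, c], rfl, by simp [mul_assoc]⟩

end Aux

/-- The span of `{v·f, f·v : f ∈ F, v a generator}` is the whole degree-3 part `A₃`. -/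
theorem stmt13 (k : Type*) [Field k] (s : ℕ) (hs : 0 < s) :
    Submodule.span k {g : FreeAlgebra k (Fin s ⊕ Fin (s + 1)) |
        ∃ f ∈ F13 k s, ∃ v : Fin s ⊕ Fin (s + 1), g = ι k v * f ∨ g = f * ι k v} =
      Submodule.span k {m : FreeAlgebra k (Fin s ⊕ Fin (s + 1)) |
        ∃ w : List (Fin s ⊕ Fin (s + 1)), w.length = 3 ∧ m = (w.map (ι k)).prod} := by
  apply le_antisymm
  · rw [Submodule.span_le]
    rintro g ⟨f, hf, v, hg | hg⟩ <;> subst hg <;>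
      rcases hf with ⟨i, j, rfl⟩ | ⟨i, j, rfl⟩ | ⟨i, rfl⟩ | ⟨i, rfl⟩ | rfl
    · exact (by simp only [h1, xg, yg]; noncomm_ring :
        ι k v * h1 k s i j = ι k v * ι k (Sum.inl i) * ι k (Sum.inr j.succ)) ▸ mono3 v _ _
    · have e : ι k v * h2 k s i j
          = ι k v * ι k (Sum.inl i) * ι k (Sum.inl j)
            - ι k v * ι k (Sum.inr i.succ) * ι k (Sum.inr j.succ) := by
        simp only [h2, xg, yg]; noncomm_ring
      exact e ▸ sub_mem (mono3 v _ _) (mono3 v _ _)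
    · have e : ι k v * q1 k s i
          = ι k v * ι k (Sum.inr 0) * ι k (Sum.inl i)
            + ι k v * ι k (Sum.inl i) * ι k (Sum.inr 0)
            + ι k v * ι k (Sum.inr i.succ) * ι k (Sum.inr 0) := by
        simp only [q1, xg, yg]; noncomm_ring
      exact e ▸ add_mem (add_mem (mono3 v _ _) (mono3 v _ _)) (mono3 v _ _)
    · have e : ι k v * q2 k s i
          = ι k v * ι k (Sum.inr 0) * ι k (Sum.inr i.succ)
            + ι k v * ι k (Sum.inr i.succ) * ι k (Sum.inr 0) := by
        simp only [q2, xg, yg]; noncomm_ring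
      exact e ▸ add_mem (mono3 v _ _) (mono3 v _ _)
    · have e : ι k v * (yg k s 0 * yg k s 0)
          = ι k v * ι k (Sum.inr 0) * ι k (Sum.inr 0) := by
        simp only [yg]; noncomm_ring
      exact e ▸ mono3 v _ _
    · exact (by simp only [h1, xg, yg] :
        h1 k s i j * ι k v = ι k (Sum.inl i) * ι k (Sum.inr j.succ) * ι k v) ▸ mono3 _ _ v
    · have e : h2 k s i j * ι k v
          = ι k (Sum.inl i) * ι k (Sum.inl j) * ι k v
            - ι k (Sum.inr i.succ) * ι k (Sum.inr j.succ) * ι k v := by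
        simp only [h2, xg, yg]; noncomm_ring
      exact e ▸ sub_mem (mono3 _ _ v) (mono3 _ _ v)
    · have e : q1 k s i * ι k v
          = ι k (Sum.inr 0) * ι k (Sum.inl i) * ι k v
            + ι k (Sum.inl i) * ι k (Sum.inr 0) * ι k v
            + ι k (Sum.inr i.succ) * ι k (Sum.inr 0) * ι k v := by
        simp only [q1, xg, yg]; noncomm_ring
      exact e ▸ add_mem (add_mem (mono3 _ _ v) (mono3 _ _ v)) (mono3 _ _ v)
    · have e : q2 k s i * ι k v
          = ι k (Sum.inr 0) * ι k (Sum.inr i.succ) * ι k v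
            + ι k (Sum.inr i.succ) * ι k (Sum.inr 0) * ι k v := by
        simp only [q2, xg, yg]; noncomm_ring
      exact e ▸ add_mem (mono3 _ _ v) (mono3 _ _ v)
    · have e : yg k s 0 * yg k s 0 * ι k v
          = ι k (Sum.inr 0) * ι k (Sum.inr 0) * ι k v := by
        simp only [yg]
      exact e ▸ mono3 _ _ v
  · rw [Submodule.span_le]
    rintro m ⟨w, hw, rfl⟩
    match w, hw with
    | [a, b, c], _ =>
      have : ((([a, b, c]).map (ι k)).prod : FreeAlgebra k (Fin s ⊕ Fin (s + 1)))
          = ι k a * (ι k b * ι k c) := by simp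
      rw [this]
      exact key a b c
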